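/- Let G be a countable group, H ≤ G a subgroup, m a mean on G invariant under conjugation by H, and A ⊆ ℓ^∞(G) a separable (in the supremum norm) subalgebra. Then there exists a sequence (p_n)_{n∈ℕ} of probability vectors on G such that ‖h p_n h⁻¹ − p_n‖₁ → 0 for all h ∈ H, and Σ_{g∈G} p_n(g)φ(g) → m(φ) for all φ ∈ A. -/

import Mathlib

open Pointwise

/-- A mean on `X`: a finitely additive probability measure defined on all subsets of `X`. -/
structure Mean (X : Type*) where
  m : Set X → ℝ
  nonneg : ∀ A : Set X, 0 ≤ m A
  total : m Set.univ = 1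
  fin_add : ∀ A B : Set X, Disjoint A B → m (A ∪ B) = m A + m B

/-- A mean on a `G`-set `X` is invariant if it is preserved by the action of every `g ∈ G`. -/
def MeanInvariant (G : Type*) [Group G] {X : Type*} [MulAction G X] (m : Mean X) : Prop :=
  ∀ (g : G) (A : Set X), m.m ((fun x => g • x) '' A) = m.m A

/-- The action of `G` on `X` is amenable: there is a `G`-invariant mean on `X`. -/
def AmenableAction (G : Type*) [Group G] (X : Type*) [MulAction G X] : Prop :=
  ∃ m : Mean X, MeanInvariant G m

/-- A group is amenable if its left translation action on itself admits an invariant mean. -/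
def AmenableGroup (G : Type*) [Group G] : Prop :=
  ∃ m : Mean G, ∀ (g : G) (A : Set G), m.m ((fun x => g * x) '' A) = m.m A

/-- `H` is `L`-q-normal in `M` if `{g ∈ M : gHg⁻¹ ∩ H ∈ L}` generates `M`. -/
def IsLQNormal {G : Type*} [Group G] (L : Subgroup G → Prop) (H M : Subgroup G) : Prop :=
  H ≤ M ∧
    Subgroup.closure
      {g : G | g ∈ M ∧ L (Subgroup.map (MulAut.conj g).toMonoidHom H ⊓ H)} = M

/-- `H` is `L`-wq-normal in `M`: there is an increasing ordinal-indexed chain from `H` to `M`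
whose unions of initial segments are `L`-q-normal at every stage. -/
def IsLWQNormal {G : Type*} [Group G] (L : Subgroup G → Prop) (H M : Subgroup G) : Prop :=
  ∃ (lam : Ordinal.{0}) (c : Ordinal.{0} → Subgroup G),
    (∀ α β : Ordinal.{0}, α ≤ β → β ≤ lam → c α ≤ c β) ∧
    c 0 = H ∧ c lam = M ∧
    ∀ α : Ordinal.{0}, 0 < α → α ≤ lam →
      IsLQNormal L (⨆ (β : Ordinal.{0}) (_ : β < α), c β) (c α)

/-- q*-normality: `{g ∈ M : gHg⁻¹ ∩ H nonamenable}` generates `M`. -/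
def IsQStarNormal {G : Type*} [Group G] (H M : Subgroup G) : Prop :=
  IsLQNormal (fun K => ¬ AmenableGroup ↥K) H M

/-- wq*-normality. -/
def IsWQStarNormal {G : Type*} [Group G] (H M : Subgroup G) : Prop :=
  IsLWQNormal (fun K => ¬ AmenableGroup ↥K) H M

/-- q-normality: `{g ∈ M : gHg⁻¹ ∩ H infinite}` generates `M`. -/
def IsQNormal {G : Type*} [Group G] (H M : Subgroup G) : Prop :=
  IsLQNormal (fun K => ((K : Set G)).Infinite) H M

/-- wq-normality. -/
def IsWQNormal {G : Type*} [Group G] (H M : Subgroup G) : Prop :=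
  IsLWQNormal (fun K => ((K : Set G)).Infinite) H M

/-- `n`-degree `L`-wq-normality in `G`: `L₀ = L`, `L_{n+1} = {H : H is Lₙ-wq-normal in G}`. -/
def NDegLWQNormal {G : Type*} [Group G] (L : Subgroup G → Prop) : ℕ → Subgroup G → Prop
  | 0, H => L H
  | n + 1, H => IsLWQNormal (NDegLWQNormal L n) H ⊤

/-- The isoperimetric constant `φ_S(X)` of a `G`-set `X` with respect to a finite `S ⊆ G`. -/
noncomputable def phiConst {G : Type*} [Group G] (S : Finset G) (X : Type*) [MulAction G X] :
    ℝ :=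
  sInf {r : ℝ | ∃ P : Finset X, P.Nonempty ∧
    r = (∑ s ∈ S, (((s • (P : Set X)) \ (P : Set X)).ncard : ℝ)) / (P.card : ℝ)}


/-- The integral of a (bounded) function against a mean: the value of the unique positive
unital linear functional on bounded functions extending `m`, realized as the supremum of
the integrals of simple functions dominated by `f`. -/
noncomputable def Mean.integral {X : Type*} (m : Mean X) (f : X → ℝ) : ℝ :=
  sSup {r : ℝ | ∃ g : X → ℝ, (Set.range g).Finite ∧ (∀ x, g x ≤ f x) ∧
    r = ∑ᶠ y : ℝ, y * m.m (g ⁻¹' {y})}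

/-!
Mazur's argument. Given finitely many bounded `dᵢ` and finitely many `h_k ∈ H`, attach to each
`x ∈ G` the vector `((dᵢ x - m dᵢ)ᵢ, (δ_{h_k x h_k⁻¹} - δ_x)_k)` of `ℝ^ι × ℓ¹(G)^κ`. For a finitely
supported probability vector `p`, the corresponding convex combination records how far `p` is
from `m` on the `dᵢ` and from `h_k p h_k⁻¹` in `ℓ¹`. A continuous functional, evaluated along these
vectors, is a bounded function `Σ aᵢ (dᵢ - m dᵢ) + Σ (ψ_k ∘ conj h_k - ψ_k)`; by linearity and
conjugation invariance of `m` its integral vanishes, so it is not bounded below by a positive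
constant. By Hahn–Banach, `0` lies in the closed convex hull of the vectors, which gives such a `p`
with all deviations small. A diagonal argument over enumerations of `H` and of a countable dense
subset of `A` gives the sequence, and density extends the convergence to all of `A`.

Linearity of `Mean.integral` on bounded functions comes from approximating from below, within
`ε`, by functions with finite range, on which the integral is a finite sum over level sets.
-/

open Set Function Filter Topology
open scoped ENNReal lp

section General

variable {X : Type*}

namespace Set

theorem finite_range_pair {g g' : X → ℝ} (hg : (range g).Finite) (hg' : (range g').Finite) :
    (range fun x => (g x, g' x)).Finite :=
  (hg.prod hg').subset (range_subset_iff.2 fun x => ⟨mem_range_self x, mem_range_self x⟩)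

theorem finite_range_add {g g' : X → ℝ} (hg : (range g).Finite) (hg' : (range g').Finite) :
    (range (g + g')).Finite :=
  (hg.add hg').subset <| range_subset_iff.2 fun x =>
    add_mem_add (mem_range_self x) (mem_range_self x)

theorem finite_range_smul {g : X → ℝ} (hg : (range g).Finite) (c : ℝ) : (range (c • g)).Finite :=
  (hg.image (c • ·)).subset (range_subset_iff.2 fun x => mem_image_of_mem _ (mem_range_self x))

end Set

theorem Memℓp.bddAbove_range {f : X → ℝ} (hf : Memℓp f ∞) : BddAbove (range f) :=
  let ⟨C, hC⟩ := hf.bddAbove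
  ⟨C, forall_mem_range.2 fun x => (le_abs_self _).trans (hC ⟨x, rfl⟩)⟩

theorem Memℓp.bddBelow_range {f : X → ℝ} (hf : Memℓp f ∞) : BddBelow (range f) :=
  let ⟨C, hC⟩ := hf.bddAbove
  ⟨-C, forall_mem_range.2 fun x => (neg_le_neg (hC ⟨x, rfl⟩)).trans (neg_abs_le _)⟩

theorem memℓp_infty_of_abs_le {f : X → ℝ} {C : ℝ} (h : ∀ x, |f x| ≤ C) : Memℓp f ∞ :=
  memℓp_infty ⟨C, forall_mem_range.2 h⟩

theorem zero_mem_closure_convexHull_range {E ι : Type*} [AddCommGroup E] [TopologicalSpace E]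
    [Module ℝ E] [IsTopologicalAddGroup E] [ContinuousSMul ℝ E] [LocallyConvexSpace ℝ E]
    (v : ι → E) (hv : ∀ (f : StrongDual ℝ E) (c : ℝ), (∀ i, c ≤ f (v i)) → c ≤ 0) :
    (0 : E) ∈ closure (convexHull ℝ (range v)) := by
  by_contra h
  obtain ⟨f, u, hf0, hfu⟩ :=
    geometric_hahn_banach_point_closed (convex_convexHull ℝ _).closure isClosed_closure h
  rw [map_zero] at hf0
  have := hv f u fun i => (hfu _ (subset_closure (subset_convexHull ℝ _ (mem_range_self i)))).le
  linarith

theorem LinearMap.apply_prod_pi {R M F ι κ : Type*} [CommSemiring R] [AddCommMonoid M] [Module R M]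
    [AddCommMonoid F] [Module R F] [Fintype ι] [Fintype κ] [DecidableEq ι] [DecidableEq κ]
    (f : (ι → R) × (κ → F) →ₗ[R] M) (x : ι → R) (y : κ → F) :
    f (x, y) = ∑ i, x i • f (Pi.single i 1, 0) + ∑ k, f (0, Pi.single k (y k)) := by
  have hxy : (x, y) = ∑ i, x i • ((Pi.single i 1 : ι → R), (0 : κ → F)) +
      ∑ k, ((0 : ι → R), Pi.single k (y k)) := by
    ext <;> simp [Prod.fst_sum, Prod.snd_sum, Finset.sum_apply, Pi.single_apply]
  rw [hxy, map_add, map_sum, map_sum]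
  simp_rw [map_smul]

theorem lp.norm_eq_tsum_abs (y : ℓ¹(X, ℝ)) : ‖y‖ = ∑' x, |y x| := by
  simpa using lp.norm_eq_tsum_rpow (p := 1) (by simp) y

structure IsFiniteProbabilityVector (p : X → ℝ) : Prop where
  nonneg : ∀ x, 0 ≤ p x
  hasFiniteSupport : HasFiniteSupport p
  tsum_eq_one : ∑' x, p x = 1

theorem isFiniteProbabilityVector_indicator {s : Finset X} {w : X → ℝ}
    (hw₀ : ∀ x ∈ s, 0 ≤ w x) (hw₁ : ∑ x ∈ s, w x = 1) :
    IsFiniteProbabilityVector ((s : Set X).indicator w) where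
  nonneg _ := indicator_nonneg hw₀ _
  hasFiniteSupport := s.finite_toSet.subset support_indicator_subset
  tsum_eq_one := (sum_eq_tsum_indicator w s).symm.trans hw₁

theorem IsFiniteProbabilityVector.abs_tsum_mul_sub_tsum_mul_le {p f g : X → ℝ}
    (hp : IsFiniteProbabilityVector p) {ε : ℝ} (h : ∀ x, |f x - g x| ≤ ε) :
    |∑' x, p x * f x - ∑' x, p x * g x| ≤ ε := by
  set s := hp.hasFiniteSupport.toFinset
  have hsupp : support p ⊆ s := hp.hasFiniteSupport.coe_toFinset.ge
  have hs (f : X → ℝ) : ∑' x, p x * f x = ∑ x ∈ s, p x * f x :=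
    tsum_eq_sum' ((support_mul_subset_left _ _).trans hsupp)
  have hp₁ : ∑ x ∈ s, p x = 1 := (tsum_eq_sum' hsupp).symm.trans hp.tsum_eq_one
  rw [hs, hs, ← Finset.sum_sub_distrib]
  calc |∑ x ∈ s, (p x * f x - p x * g x)| ≤ ∑ x ∈ s, p x * |f x - g x| := by
        refine (Finset.abs_sum_le_sum_abs _ _).trans_eq (Finset.sum_congr rfl fun x _ => ?_)
        rw [← mul_sub, abs_mul, abs_of_nonneg (hp.nonneg x)]
    _ ≤ ∑ x ∈ s, p x * ε := by gcongr with x; exacts [hp.nonneg x, h x]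
    _ = ε := by rw [← Finset.sum_mul, hp₁, one_mul]

theorem tendsto_of_forall_abs_sub_le {α : Type*} {l : Filter α} {u : α → ℝ} {a : ℝ}
    (h : ∀ ε > 0, ∃ (v : α → ℝ) (b : ℝ),
      Tendsto v l (𝓝 b) ∧ (∀ n, |u n - v n| ≤ ε) ∧ |b - a| ≤ ε) :
    Tendsto u l (𝓝 a) := by
  refine Metric.tendsto_nhds.2 fun ε hε => ?_
  obtain ⟨v, b, hv, huv, hba⟩ := h (ε / 3) (by positivity)
  filter_upwards [Metric.tendsto_nhds.1 hv (ε / 3) (by positivity)] with n hn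
  rw [Real.dist_eq] at hn ⊢
  linarith [abs_sub_le (u n) (v n) a, abs_sub_le (v n) b a, huv n]

theorem tendsto_of_eventually_abs_sub_lt_one_div {u : ℕ → ℝ} {a : ℝ}
    (h : ∀ᶠ n in atTop, |u n - a| < 1 / (n + 1)) : Tendsto u atTop (𝓝 a) :=
  tendsto_iff_dist_tendsto_zero.2 <| squeeze_zero' (.of_forall fun _ => dist_nonneg)
    (h.mono fun _ hn => hn.le) tendsto_one_div_add_atTop_nhds_zero_nat

end General

namespace Mean

section

variable {X : Type*} (m : Mean X)

theorem measure_empty : m.m ∅ = 0 := by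
  have h := m.fin_add ∅ ∅ (disjoint_empty _)
  rw [union_empty] at h
  linarith

theorem measure_biUnion_finset {ι : Type*} (s : Finset ι) {A : ι → Set X}
    (hA : (s : Set ι).PairwiseDisjoint A) : m.m (⋃ i ∈ s, A i) = ∑ i ∈ s, m.m (A i) := by
  classical
  induction s using Finset.induction_on with
  | empty => simp [measure_empty]
  | insert a s ha ih =>
    rw [Finset.coe_insert, pairwiseDisjoint_insert] at hA
    rw [Finset.set_biUnion_insert, m.fin_add _ _ ?_, ih hA.1, Finset.sum_insert ha]
    exact disjoint_iUnion₂_right.2 fun i hi => hA.2 i hi (ne_of_mem_of_not_mem hi ha).symm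

theorem measure_preimage_singleton_of_notMem_range {κ : Type*} {k : X → κ} {c : κ}
    (hc : c ∉ range k) : m.m (k ⁻¹' {c}) = 0 := by
  rw [preimage_singleton_eq_empty.2 hc, measure_empty]

theorem support_mul_measure_preimage_subset {κ : Type*} (k : X → κ) (w : κ → ℝ) :
    support (fun c => w c * m.m (k ⁻¹' {c})) ⊆ range k := fun _ hc => by_contra fun h =>
  hc (by simp only [m.measure_preimage_singleton_of_notMem_range h, mul_zero])

noncomputable def simpleIntegral (g : X → ℝ) : ℝ := ∑ᶠ y : ℝ, y * m.m (g ⁻¹' {y})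

theorem simpleIntegral_comp {κ : Type*} {k : X → κ} (hk : (range k).Finite) (v : κ → ℝ) :
    m.simpleIntegral (v ∘ k) = ∑ᶠ c, v c * m.m (k ⁻¹' {c}) := by
  classical
  set K := hk.toFinset
  have hK : ∀ x, k x ∈ K := fun x => hk.mem_toFinset.2 (mem_range_self x)
  have hfiber : ∀ y, m.m ((v ∘ k) ⁻¹' {y}) = ∑ c ∈ K with v c = y, m.m (k ⁻¹' {c}) := by
    intro y
    rw [← m.measure_biUnion_finset _ fun c _ c' _ hcc' => (disjoint_singleton.2 hcc').preimage k]
    congr 1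
    ext x
    simp [hK x]
  rw [simpleIntegral, finsum_eq_sum_of_support_subset (s := K.image v),
    finsum_eq_sum_of_support_subset (s := K)]
  · simp_rw [hfiber, Finset.mul_sum]
    rw [← Finset.sum_fiberwise_of_maps_to fun c hc => Finset.mem_image_of_mem v hc]
    refine Finset.sum_congr rfl fun y _ => Finset.sum_congr rfl fun c hc => ?_
    rw [(Finset.mem_filter.1 hc).2]
  · refine (m.support_mul_measure_preimage_subset k v).trans ?_
    rintro _ ⟨x, rfl⟩
    exact hK x
  · refine (m.support_mul_measure_preimage_subset (v ∘ k) id).trans ?_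
    rintro _ ⟨x, rfl⟩
    exact Finset.mem_image_of_mem v (hK x)

-- `g`, `g'` and `g + g'` all factor through `x ↦ (g x, g' x)`, so `simpleIntegral_comp`
-- computes their integrals over the same finite partition of `X`.
theorem simpleIntegral_add {g g' : X → ℝ} (hg : (range g).Finite) (hg' : (range g').Finite) :
    m.simpleIntegral (g + g') = m.simpleIntegral g + m.simpleIntegral g' := by
  have hk := finite_range_pair hg hg'
  have hfin (w : ℝ × ℝ → ℝ) :
      HasFiniteSupport fun c => w c * m.m ((fun x => (g x, g' x)) ⁻¹' {c}) :=
    hk.subset (m.support_mul_measure_preimage_subset _ w)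
  have h₁ : m.simpleIntegral g = _ := m.simpleIntegral_comp hk Prod.fst
  have h₂ : m.simpleIntegral g' = _ := m.simpleIntegral_comp hk Prod.snd
  have h : m.simpleIntegral (g + g') = _ := m.simpleIntegral_comp hk fun c => c.1 + c.2
  simp_rw [h, h₁, h₂, add_mul]
  exact finsum_add_distrib (hfin _) (hfin _)

theorem simpleIntegral_mono {g g' : X → ℝ} (hg : (range g).Finite) (hg' : (range g').Finite)
    (h : g ≤ g') : m.simpleIntegral g ≤ m.simpleIntegral g' := by
  have hk := finite_range_pair hg hg'
  have h₁ : m.simpleIntegral g = _ := m.simpleIntegral_comp hk Prod.fst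
  have h₂ : m.simpleIntegral g' = _ := m.simpleIntegral_comp hk Prod.snd
  rw [h₁, h₂]
  refine finsum_le_finsum' (hk.subset (m.support_mul_measure_preimage_subset _ _))
    (hk.subset (m.support_mul_measure_preimage_subset _ _)) fun c => ?_
  by_cases hc : c ∈ range fun x => (g x, g' x)
  · obtain ⟨x, rfl⟩ := hc
    exact mul_le_mul_of_nonneg_right (h x) (m.nonneg _)
  · simp [m.measure_preimage_singleton_of_notMem_range hc]

theorem simpleIntegral_const (c : ℝ) : m.simpleIntegral (fun _ => c) = c := by
  have h : m.simpleIntegral (fun _ => c) = _ :=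
    m.simpleIntegral_comp (toFinite (range fun _ : X => ())) fun _ => c
  simp [h, m.total, finsum_unique]

theorem simpleIntegral_smul {g : X → ℝ} (hg : (range g).Finite) (c : ℝ) :
    m.simpleIntegral (c • g) = c * m.simpleIntegral g := by
  have h : m.simpleIntegral (c • g) = _ := m.simpleIntegral_comp hg (c * ·)
  rw [h, simpleIntegral, mul_finsum]
  simp_rw [mul_assoc]

theorem simpleIntegral_comp_symm {σ : X ≃ X} (hσ : ∀ A, m.m (σ '' A) = m.m A) (g : X → ℝ) :
    m.simpleIntegral (g ∘ σ.symm) = m.simpleIntegral g := by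
  simp_rw [simpleIntegral, preimage_comp, ← σ.image_eq_preimage_symm, hσ]

def lowerSums (f : X → ℝ) : Set ℝ :=
  {r | ∃ g : X → ℝ, (range g).Finite ∧ g ≤ f ∧ r = m.simpleIntegral g}

theorem integral_eq_sSup_lowerSums (f : X → ℝ) : m.integral f = sSup (m.lowerSums f) := rfl

variable {m}

theorem simpleIntegral_mem_lowerSums {f g : X → ℝ} (hg : (range g).Finite) (hgf : g ≤ f) :
    m.simpleIntegral g ∈ m.lowerSums f :=
  ⟨g, hg, hgf, rfl⟩

theorem lowerSums_nonempty {f : X → ℝ} (hf : BddBelow (range f)) : (m.lowerSums f).Nonempty :=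
  let ⟨c, hc⟩ := hf
  ⟨_, simpleIntegral_mem_lowerSums (finite_range_const (c := c)) fun x => hc ⟨x, rfl⟩⟩

theorem bddAbove_lowerSums {f : X → ℝ} (hf : BddAbove (range f)) : BddAbove (m.lowerSums f) := by
  obtain ⟨C, hC⟩ := hf
  refine ⟨C, ?_⟩
  rintro _ ⟨g, hg, hgf, rfl⟩
  calc m.simpleIntegral g ≤ m.simpleIntegral fun _ => C :=
        m.simpleIntegral_mono hg finite_range_const fun x => (hgf x).trans (hC ⟨x, rfl⟩)
    _ = C := m.simpleIntegral_const C

theorem simpleIntegral_le_integral {f g : X → ℝ} (hf : BddAbove (range f))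
    (hg : (range g).Finite) (hgf : g ≤ f) : m.simpleIntegral g ≤ m.integral f :=
  le_csSup (bddAbove_lowerSums hf) (simpleIntegral_mem_lowerSums hg hgf)

theorem integral_mono {f f' : X → ℝ} (hf : BddBelow (range f)) (hf' : BddAbove (range f'))
    (h : f ≤ f') : m.integral f ≤ m.integral f' :=
  csSup_le_csSup (bddAbove_lowerSums hf') (lowerSums_nonempty hf)
    fun _ ⟨g, hg, hgf, hr⟩ => ⟨g, hg, le_trans hgf h, hr⟩

theorem integral_eq_simpleIntegral {g : X → ℝ} (hg : (range g).Finite) :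
    m.integral g = m.simpleIntegral g :=
  (csSup_le (lowerSums_nonempty hg.bddBelow) fun _ ⟨_, hg', hg'g, hr⟩ =>
    hr ▸ m.simpleIntegral_mono hg' hg hg'g).antisymm
    (simpleIntegral_le_integral hg.bddAbove hg le_rfl)

variable (m) in
theorem integral_const (c : ℝ) : m.integral (fun _ => c) = c :=
  (integral_eq_simpleIntegral finite_range_const).trans (m.simpleIntegral_const c)

theorem le_integral_of_forall_le {f : X → ℝ} {c : ℝ} (hf : BddAbove (range f))
    (h : ∀ x, c ≤ f x) : c ≤ m.integral f :=
  (m.integral_const c).symm.trans_le (integral_mono finite_range_const.bddBelow hf h)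

theorem integral_le_of_forall_le {f : X → ℝ} {C : ℝ} (hf : BddBelow (range f))
    (h : ∀ x, f x ≤ C) : m.integral f ≤ C :=
  (integral_mono hf finite_range_const.bddAbove h).trans_eq (m.integral_const C)

theorem exists_simple_le_le_add {f : X → ℝ} (hf : BddAbove (range f)) (hf' : BddBelow (range f))
    {ε : ℝ} (hε : 0 < ε) : ∃ g : X → ℝ, (range g).Finite ∧ g ≤ f ∧ ∀ x, f x ≤ g x + ε := by
  obtain ⟨C, hC⟩ := hf
  obtain ⟨c, hc⟩ := hf'
  refine ⟨fun x => ε * ⌊f x / ε⌋, ?_, fun x => ?_, fun x => ?_⟩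
  · refine ((finite_Icc ⌊c / ε⌋ ⌊C / ε⌋).image fun n : ℤ => ε * n).subset ?_
    rintro _ ⟨x, rfl⟩
    refine ⟨⌊f x / ε⌋, ⟨Int.floor_mono ?_, Int.floor_mono ?_⟩, rfl⟩ <;>
      gcongr
    exacts [hc ⟨x, rfl⟩, hC ⟨x, rfl⟩]
  · have := Int.floor_le (f x / ε)
    calc ε * ⌊f x / ε⌋ ≤ ε * (f x / ε) := by gcongr
      _ = f x := mul_div_cancel₀ _ hε.ne'
  · have := Int.lt_floor_add_one (f x / ε)
    calc f x = ε * (f x / ε) := (mul_div_cancel₀ _ hε.ne').symm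
      _ ≤ ε * (⌊f x / ε⌋ + 1) := by gcongr
      _ = ε * ⌊f x / ε⌋ + ε := by ring

theorem lowerSums_smul {f : X → ℝ} {c : ℝ} (hc : 0 < c) :
    m.lowerSums (c • f) = c • m.lowerSums f := by
  ext r
  constructor
  · rintro ⟨g, hg, hgf, rfl⟩
    refine ⟨_, ⟨c⁻¹ • g, finite_range_smul hg _, fun x => (inv_mul_le_iff₀ hc).2 (hgf x), rfl⟩, ?_⟩
    change c * _ = _
    rw [← m.simpleIntegral_smul (finite_range_smul hg _), smul_inv_smul₀ hc.ne']
  · rintro ⟨_, ⟨g, hg, hgf, rfl⟩, rfl⟩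
    exact ⟨c • g, finite_range_smul hg c, smul_le_smul_of_nonneg_left hgf hc.le,
      (m.simpleIntegral_smul hg c).symm⟩

theorem integral_smul_of_pos {c : ℝ} (hc : 0 < c) (f : X → ℝ) :
    m.integral (c • f) = c * m.integral f := by
  rw [integral_eq_sSup_lowerSums, lowerSums_smul hc, Real.sSup_smul_of_nonneg hc.le, smul_eq_mul]
  rfl

theorem integral_comp_equiv {σ : X ≃ X} (hσ : ∀ A, m.m (σ '' A) = m.m A) (f : X → ℝ) :
    m.integral (f ∘ σ) = m.integral f := by
  rw [integral_eq_sSup_lowerSums, integral_eq_sSup_lowerSums]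
  congr 1
  ext r
  constructor
  · rintro ⟨g, hg, hgf, rfl⟩
    refine ⟨g ∘ σ.symm, hg.subset (range_comp_subset_range _ _), fun x => ?_,
      (m.simpleIntegral_comp_symm hσ g).symm⟩
    simpa using hgf (σ.symm x)
  · rintro ⟨g, hg, hgf, rfl⟩
    refine ⟨g ∘ σ, hg.subset (range_comp_subset_range _ _), fun x => hgf (σ x), ?_⟩
    rw [← m.simpleIntegral_comp_symm hσ (g ∘ σ), comp_assoc, σ.self_comp_symm, comp_id]

theorem integral_add {f g : X → ℝ} (hf : Memℓp f ∞) (hg : Memℓp g ∞) :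
    m.integral (f + g) = m.integral f + m.integral g := by
  refine le_antisymm (le_of_forall_pos_le_add fun ε hε => ?_) ?_
  · obtain ⟨f₀, hf₀, hf₀f, hff₀⟩ :=
      exists_simple_le_le_add hf.bddAbove_range hf.bddBelow_range (half_pos hε)
    obtain ⟨g₀, hg₀, hg₀g, hgg₀⟩ :=
      exists_simple_le_le_add hg.bddAbove_range hg.bddBelow_range (half_pos hε)
    have hs := finite_range_add (finite_range_add hf₀ hg₀) (finite_range_const (c := ε))
    calc m.integral (f + g) ≤ m.integral (f₀ + g₀ + fun _ => ε) :=
          integral_mono (hf.add hg).bddBelow_range hs.bddAbove fun x => by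
            have := hff₀ x
            have := hgg₀ x
            simp only [Pi.add_apply]
            linarith
      _ = m.simpleIntegral f₀ + m.simpleIntegral g₀ + ε := by
          rw [integral_eq_simpleIntegral hs,
            m.simpleIntegral_add (finite_range_add hf₀ hg₀) finite_range_const,
            m.simpleIntegral_add hf₀ hg₀, simpleIntegral_const]
      _ ≤ m.integral f + m.integral g + ε := by
          gcongr
          exacts [simpleIntegral_le_integral hf.bddAbove_range hf₀ hf₀f,
            simpleIntegral_le_integral hg.bddAbove_range hg₀ hg₀g]
  · rw [integral_eq_sSup_lowerSums, integral_eq_sSup_lowerSums, integral_eq_sSup_lowerSums,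
      ← csSup_add (lowerSums_nonempty hf.bddBelow_range) (bddAbove_lowerSums hf.bddAbove_range)
        (lowerSums_nonempty hg.bddBelow_range) (bddAbove_lowerSums hg.bddAbove_range)]
    refine csSup_le_csSup (bddAbove_lowerSums (hf.add hg).bddAbove_range)
      ((lowerSums_nonempty hf.bddBelow_range).add (lowerSums_nonempty hg.bddBelow_range)) ?_
    rintro _ ⟨_, ⟨f₀, hf₀, hf₀f, rfl⟩, _, ⟨g₀, hg₀, hg₀g, rfl⟩, rfl⟩
    exact ⟨f₀ + g₀, finite_range_add hf₀ hg₀, add_le_add hf₀f hg₀g,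
      (m.simpleIntegral_add hf₀ hg₀).symm⟩

theorem integral_neg {f : X → ℝ} (hf : Memℓp f ∞) : m.integral (-f) = -m.integral f := by
  have h := integral_add (m := m) hf hf.neg
  rw [add_neg_cancel, show m.integral 0 = 0 from m.integral_const 0] at h
  linarith

theorem integral_sub {f g : X → ℝ} (hf : Memℓp f ∞) (hg : Memℓp g ∞) :
    m.integral (f - g) = m.integral f - m.integral g := by
  rw [sub_eq_add_neg, integral_add hf hg.neg, integral_neg hg, sub_eq_add_neg]

theorem integral_smul {f : X → ℝ} (hf : Memℓp f ∞) (c : ℝ) :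
    m.integral (c • f) = c * m.integral f := by
  rcases lt_trichotomy c 0 with hc | rfl | hc
  · rw [← neg_neg c, neg_smul, integral_neg (hf.const_smul _),
      integral_smul_of_pos (neg_pos.2 hc)]
    ring
  · rw [zero_smul, zero_mul]
    exact m.integral_const 0
  · exact integral_smul_of_pos hc f

theorem abs_integral_sub_le {f g : X → ℝ} (hf : Memℓp f ∞) (hg : Memℓp g ∞) {ε : ℝ}
    (h : ∀ x, |f x - g x| ≤ ε) : |m.integral f - m.integral g| ≤ ε := by
  rw [← integral_sub hf hg, abs_le]
  exact ⟨le_integral_of_forall_le (hf.sub hg).bddAbove_range fun x => (abs_le.1 (h x)).1,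
    integral_le_of_forall_le (hf.sub hg).bddBelow_range fun x => (abs_le.1 (h x)).2⟩

variable (m) in
def integralKer : Submodule ℝ (X → ℝ) where
  carrier := {f | Memℓp f ∞ ∧ m.integral f = 0}
  add_mem' hf hg := ⟨hf.1.add hg.1, by rw [integral_add hf.1 hg.1, hf.2, hg.2, add_zero]⟩
  zero_mem' := ⟨zero_memℓp, m.integral_const 0⟩
  smul_mem' c _ hf := ⟨hf.1.const_smul c, by rw [integral_smul hf.1, hf.2, mul_zero]⟩

theorem sub_const_integral_mem_integralKer {f : X → ℝ} (hf : Memℓp f ∞) :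
    f - (fun _ => m.integral f) ∈ m.integralKer := by
  have hc : Memℓp (fun _ : X => m.integral f) ∞ := memℓp_infty_of_abs_le fun _ => le_rfl
  exact ⟨hf.sub hc, by rw [integral_sub hf hc, integral_const, sub_self]⟩

theorem comp_sub_mem_integralKer {σ : X ≃ X} (hσ : ∀ A, m.m (σ '' A) = m.m A) {f : X → ℝ}
    (hf : Memℓp f ∞) : f ∘ σ - f ∈ m.integralKer := by
  have hfσ : Memℓp (f ∘ σ) ∞ := memℓp_infty_iff.2 <| by
    rw [show (fun x => ‖(f ∘ σ) x‖) = (fun x => ‖f x‖) ∘ σ from rfl, σ.surjective.range_comp]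
    exact hf.bddAbove
  exact ⟨hfσ.sub hf, by rw [integral_sub hfσ hf, integral_comp_equiv hσ, sub_self]⟩

end

section

variable {X ι κ : Type*}

noncomputable def diracDefect [DecidableEq X] (m : Mean X) (d : ι → X → ℝ) (σ : κ → X ≃ X) (x : X) :
    (ι → ℝ) × (κ → ℓ¹(X, ℝ)) :=
  (fun i => d i x - m.integral (d i), fun k => lp.single 1 (σ k x) 1 - lp.single 1 x 1)

variable {m : Mean X} {d : ι → X → ℝ} {σ : κ → X ≃ X}

theorem comp_diracDefect_mem_integralKer [DecidableEq X] [Fintype ι] [Fintype κ]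
    (hd : ∀ i, Memℓp (d i) ∞) (hσ : ∀ k A, m.m (σ k '' A) = m.m A) (f : StrongDual ℝ ((ι → ℝ) × (κ → ℓ¹(X, ℝ)))) :
    (fun x => f (m.diracDefect d σ x)) ∈ m.integralKer := by
  classical
  set ψ : κ → X → ℝ := fun k x => f (0, Pi.single k (lp.single 1 x 1))
  have hψ (k : κ) : Memℓp (ψ k) ∞ := memℓp_infty_of_abs_le (C := ‖f‖) fun x => by
    simpa [ψ, Pi.norm_single] using f.le_opNorm (0, Pi.single k (lp.single 1 x 1))
  have hf : (fun x => f (m.diracDefect d σ x)) =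
      ∑ i, f (Pi.single i 1, 0) • (d i - fun _ => m.integral (d i)) + ∑ k, (ψ k ∘ σ k - ψ k) := by
    ext x
    have h := f.toLinearMap.apply_prod_pi (fun i => d i x - m.integral (d i))
      fun k => lp.single 1 (σ k x) 1 - lp.single 1 x 1
    simp only [ContinuousLinearMap.coe_coe] at h
    rw [diracDefect, h]
    simp only [smul_eq_mul, Finset.sum_sub_distrib, Pi.add_apply, Finset.sum_apply,
      Pi.smul_apply, Pi.sub_apply, mul_comm, comp_apply, add_right_inj, ψ]
    rw [← Finset.sum_sub_distrib]
    refine Finset.sum_congr rfl fun k _ => ?_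
    rw [← map_sub, Prod.mk_sub_mk, sub_zero, Pi.single_sub]
  rw [hf]
  exact add_mem
    (sum_mem fun i _ => Submodule.smul_mem _ _ (sub_const_integral_mem_integralKer (hd i)))
    (sum_mem fun k _ => comp_sub_mem_integralKer (hσ k) (hψ k))

theorem fst_sum_smul_diracDefect [DecidableEq X] {s : Finset X} {w : X → ℝ}
    (hw : ∑ x ∈ s, w x = 1) (i : ι) :
    (∑ x ∈ s, w x • m.diracDefect d σ x).1 i =
      ∑' x, (s : Set X).indicator w x * d i x - m.integral (d i) := by
  simp_rw [← indicator_mul_left, ← sum_eq_tsum_indicator]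
  simp [diracDefect, Prod.fst_sum, mul_sub, Finset.sum_sub_distrib, ← Finset.sum_mul, hw]

theorem coe_snd_sum_smul_diracDefect [DecidableEq X] (s : Finset X) (w : X → ℝ) (k : κ) :
    ⇑((∑ x ∈ s, w x • m.diracDefect d σ x).2 k) =
      (s : Set X).indicator w ∘ (σ k).symm - (s : Set X).indicator w := by
  ext y
  have h : (∑ x ∈ s, w x • m.diracDefect d σ x).2 k =
      ∑ x ∈ s, (lp.single 1 (σ k x) (w x) - lp.single 1 x (w x)) := by
    simp [diracDefect, Prod.snd_sum, Finset.sum_apply, smul_sub, ← lp.single_smul]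
  rw [h, lp.coeFn_sum, Finset.sum_apply]
  simp [Pi.single_apply, indicator_apply, ← (σ k).symm_apply_eq]

theorem exists_isFiniteProbabilityVector_approx [Fintype ι] [Fintype κ] (hd : ∀ i, Memℓp (d i) ∞)
    (hσ : ∀ k A, m.m (σ k '' A) = m.m A) {δ : ℝ} (hδ : 0 < δ) :
    ∃ p : X → ℝ, IsFiniteProbabilityVector p ∧
      (∀ i, |∑' x, p x * d i x - m.integral (d i)| < δ) ∧
      ∀ k, ∑' x, |p ((σ k).symm x) - p x| < δ := by
  classical
  have h₀ := zero_mem_closure_convexHull_range (m.diracDefect d σ) fun f c hc =>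
    have hf := comp_diracDefect_mem_integralKer hd hσ f
    (le_integral_of_forall_le hf.1.bddAbove_range hc).trans_eq hf.2
  obtain ⟨_, hy, hyδ⟩ := Metric.mem_closure_iff.1 h₀ δ hδ
  rw [convexHull_range_eq_exists_affineCombination] at hy
  obtain ⟨s, w, hw₀, hw₁, rfl⟩ := hy
  rw [dist_zero_left, s.affineCombination_eq_linear_combination _ _ hw₁] at hyδ
  set y := ∑ x ∈ s, w x • m.diracDefect d σ x
  refine ⟨_, isFiniteProbabilityVector_indicator hw₀ hw₁, fun i => ?_, fun k => ?_⟩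
  · calc _ = ‖y.1 i‖ := by rw [fst_sum_smul_diracDefect hw₁, Real.norm_eq_abs]
      _ ≤ ‖y‖ := (norm_le_pi_norm y.1 i).trans (norm_fst_le y)
      _ < δ := hyδ
  · calc _ = ‖y.2 k‖ := by rw [lp.norm_eq_tsum_abs, coe_snd_sum_smul_diracDefect]; rfl
      _ ≤ ‖y‖ := (norm_le_pi_norm y.2 k).trans (norm_snd_le y)
      _ < δ := hyδ

theorem exists_seq_isFiniteProbabilityVector_tendsto {d : ℕ → X → ℝ} (hd : ∀ j, Memℓp (d j) ∞)
    {σ : ℕ → X ≃ X} (hσ : ∀ j A, m.m (σ j '' A) = m.m A) :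
    ∃ p : ℕ → X → ℝ, (∀ n, IsFiniteProbabilityVector (p n)) ∧
      (∀ j, Tendsto (fun n => ∑' x, |p n ((σ j).symm x) - p n x|) atTop (𝓝 0)) ∧
      ∀ j, Tendsto (fun n => ∑' x, p n x * d j x) atTop (𝓝 (m.integral (d j))) := by
  choose p hp hpd hpσ using fun n : ℕ => exists_isFiniteProbabilityVector_approx (m := m)
    (d := fun j : Fin (n + 1) => d j) (σ := fun j : Fin (n + 1) => σ j) (fun j => hd j)
    (fun j => hσ j) (Nat.one_div_pos_of_nat (n := n))
  refine ⟨p, hp, fun j => ?_, fun j => ?_⟩ <;>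
    refine tendsto_of_eventually_abs_sub_lt_one_div (eventually_atTop.2 ⟨j, fun n hn => ?_⟩)
  · rw [sub_zero, abs_of_nonneg (tsum_nonneg fun _ => abs_nonneg _)]
    exact hpσ n ⟨j, Nat.lt_succ_of_le hn⟩
  · exact hpd n ⟨j, Nat.lt_succ_of_le hn⟩

end

end Mean

theorem mazur_probability_vectors_general {G : Type*} [Group G] [Countable G]
    (H : Subgroup G) (m : Mean G)
    (hm : ∀ h ∈ H, ∀ A : Set G, m.m ((fun x => h * x * h⁻¹) '' A) = m.m A)
    (A : Set (G → ℝ))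
    (hbdd : ∀ φ ∈ A, ∃ C : ℝ, ∀ g : G, |φ g| ≤ C)
    (hone : (fun _ : G => (1 : ℝ)) ∈ A)
    (hsep : ∃ D ⊆ A, D.Countable ∧
      ∀ φ ∈ A, ∀ ε : ℝ, 0 < ε → ∃ ψ ∈ D, ∀ g : G, |φ g - ψ g| < ε) :
    ∃ p : ℕ → G → ℝ,
      (∀ n : ℕ, (∀ g : G, 0 ≤ p n g) ∧ Summable (p n) ∧ ∑' g : G, p n g = 1) ∧
      (∀ h ∈ H, Filter.Tendsto (fun n => ∑' g : G, |p n (h⁻¹ * g * h) - p n g|)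
        Filter.atTop (nhds 0)) ∧
      (∀ φ ∈ A, Filter.Tendsto (fun n => ∑' g : G, p n g * φ g)
        Filter.atTop (nhds (m.integral φ))) := by
  obtain ⟨D, hDA, hDc, hDdense⟩ := hsep
  obtain ⟨d, rfl⟩ := hDc.exists_eq_range (let ⟨ψ, hψ, _⟩ := hDdense _ hone 1 one_pos; ⟨ψ, hψ⟩)
  have hA (φ : G → ℝ) (hφ : φ ∈ A) : Memℓp φ ∞ :=
    let ⟨_, hC⟩ := hbdd φ hφ
    memℓp_infty_of_abs_le hC
  have : Nonempty H := ⟨1⟩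
  obtain ⟨e, he⟩ := exists_surjective_nat H
  obtain ⟨p, hp, hpσ, hpd⟩ := m.exists_seq_isFiniteProbabilityVector_tendsto
    (fun j => hA _ (hDA ⟨j, rfl⟩)) (σ := fun j => (MulAut.conj (e j : G)).toEquiv)
    fun j => hm _ (e j).2
  refine ⟨p, fun n => ⟨(hp n).nonneg, summable_of_hasFiniteSupport (hp n).hasFiniteSupport,
    (hp n).tsum_eq_one⟩, fun h hh => ?_, fun φ hφ => ?_⟩
  · obtain ⟨j, hj⟩ := he ⟨h, hh⟩
    simpa [hj] using hpσ j
  · refine tendsto_of_forall_abs_sub_le fun ε hε => ?_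
    obtain ⟨_, ⟨j, rfl⟩, hdj⟩ := hDdense φ hφ ε hε
    refine ⟨_, _, hpd j, fun n => (hp n).abs_tsum_mul_sub_tsum_mul_le fun g => (hdj g).le, ?_⟩
    rw [abs_sub_comm]
    exact Mean.abs_integral_sub_le (hA φ hφ) (hA _ (hDA ⟨j, rfl⟩)) fun g => (hdj g).le

/-- Lemma (Mazur argument): given an `H`-conjugation invariant mean `m` on `G` and a
separable subalgebra `A ⊆ ℓ^∞(G)`, there is a sequence of probability vectors `pₙ` which is
asymptotically conjugation-invariant under `H` in `ℓ¹`-norm and converges to `m` on `A`. -/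
theorem mazur_probability_vectors {G : Type*} [Group G] [Countable G]
    (H : Subgroup G) (m : Mean G)
    (hm : ∀ h ∈ H, ∀ A : Set G, m.m ((fun x => h * x * h⁻¹) '' A) = m.m A)
    (A : Set (G → ℝ))
    (hbdd : ∀ φ ∈ A, ∃ C : ℝ, ∀ g : G, |φ g| ≤ C)
    (hadd : ∀ φ ∈ A, ∀ ψ ∈ A, φ + ψ ∈ A ∧ φ * ψ ∈ A)
    (hsmul : ∀ (c : ℝ) (φ : G → ℝ), φ ∈ A → c • φ ∈ A)
    (hone : (fun _ : G => (1 : ℝ)) ∈ A)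
    (hsep : ∃ D ⊆ A, D.Countable ∧
      ∀ φ ∈ A, ∀ ε : ℝ, 0 < ε → ∃ ψ ∈ D, ∀ g : G, |φ g - ψ g| < ε) :
    ∃ p : ℕ → G → ℝ,
      (∀ n : ℕ, (∀ g : G, 0 ≤ p n g) ∧ Summable (p n) ∧ ∑' g : G, p n g = 1) ∧
      (∀ h ∈ H, Filter.Tendsto (fun n => ∑' g : G, |p n (h⁻¹ * g * h) - p n g|)
        Filter.atTop (nhds 0)) ∧
      (∀ φ ∈ A, Filter.Tendsto (fun n => ∑' g : G, p n g * φ g)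
        Filter.atTop (nhds (m.integral φ))) :=
  mazur_probability_vectors_general H m hm A hbdd hone hsep
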